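/- arXiv:2504.08143 — 3 statements merged into one kernel-verified Lean document; each statement's English description precedes it below -/
import Mathlib

section
/- Consider the linearized contour-dynamics problem for the 2D incompressible Euler equation in the annulus {z ∈ ℝ² : R₁ < |z| < R₂} around the annular patch 1_{{b ≤ |z| ≤ 1}}. For every integer m ≥ 2, the discriminant Δ_{m,b} is strictly positive if and only if m > (b²/((1−b²)(b²+2𝔠_b))) · (1/(1−(R₁/R₂)^{2m})) · ( (1−R₁^{2m})(1−R₂^{−2m}) + (1−(R₁/b)^{2m})·(1−(b/R₂)^{2m} + 2·b^m·(1−R₂^{−2m})) ). -/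
open Real

noncomputable section

namespace DCV0

/-- The constant `𝔠_b` of the annulus `{R₁ < |z| < R₂}`. -/
def frakC (R1 R2 b : ℝ) : ℝ :=
  (-(b^2/2) * Real.log b - (1 - b^2)/4 - ((1 - b^2)/2) * Real.log R2) / Real.log (R1/R2)

/-- The discriminant `Δ_{m,b}` for the linearized 2D Euler equation in the annulus. -/
def DeltaAnn (R1 R2 b : ℝ) (m : ℕ) : ℝ :=
  ((1 - b^2) * (b^2 + 2 * frakC R1 R2 b) / (2 * b^2)
      + (1/(2*(m:ℝ))) * (1/(1 - (R1/R2)^(2*m)))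
        * ((b^(2*m) + 1 - 2*R1^(2*m))/R2^(2*m) + R1^(2*m) + R1^(2*m)/b^(2*m) - 2))^2
    - ((1 - 1/R2^(2*m))^2 / (1 - R1^(2*m)/R2^(2*m))^2)
        * (b^(2*m)/(m:ℝ)^2) * (1 - R1^(2*m)/b^(2*m))^2

/-- Auxiliary: `2(1-b^m) ≤ m(1-b²)` for `m ≥ 2`, `0 < b < 1`. -/
lemma aux_mb (b : ℝ) (hb0 : 0 < b) (hb1 : b < 1) :
    ∀ m : ℕ, 2 ≤ m → 2*(1 - b^m) ≤ (m:ℝ)*(1 - b^2) := by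
  intro m hm
  induction m, hm using Nat.le_induction with
  | base => norm_num
  | succ n hn ih =>
    have hbn : b^n ≤ b := by
      simpa using pow_le_pow_of_le_one hb0.le hb1.le (show 1 ≤ n by omega)
    have hsucc : b^(n+1) = b^n * b := pow_succ b n
    push_cast
    nlinarith [sq_nonneg (1 - b), mul_nonneg (sub_nonneg.mpr hbn) (sub_nonneg.mpr hb1.le)]

/-- Auxiliary: difference of squares positivity. -/
lemma aux_sq_iff {A B : ℝ} (hB : 0 < B) (hApB : 0 < A + B) : 0 < A^2 - B^2 ↔ B < A := by
  constructor <;> intro h <;> nlinarith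

set_option maxHeartbeats 1000000 in
/-- For every integer `m ≥ 2`, the discriminant `Δ_{m,b}` is strictly positive iff
`m > (b²/((1−b²)(b²+2𝔠_b)))·(1/(1−(R₁/R₂)^{2m}))·((1−R₁^{2m})(1−R₂^{−2m})
  + (1−(R₁/b)^{2m})·(1−(b/R₂)^{2m} + 2·b^m·(1−R₂^{−2m})))`. -/

theorem discriminant_pos_iff (R1 R2 b : ℝ) (hR1 : 0 < R1) (hR1' : R1 < 1) (hR2 : 1 < R2)
    (hb1 : R1 < b) (hb2 : b < 1) (m : ℕ) (hm : 2 ≤ m) :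
    0 < DeltaAnn R1 R2 b m ↔
      (m : ℝ) > (b^2 / ((1 - b^2) * (b^2 + 2 * frakC R1 R2 b)))
        * (1/(1 - (R1/R2)^(2*m)))
        * ((1 - R1^(2*m)) * (1 - 1/R2^(2*m))
            + (1 - (R1/b)^(2*m)) * (1 - (b/R2)^(2*m) + 2*b^m*(1 - 1/R2^(2*m)))) := by
  have hb0 : 0 < b := hR1.trans hb1
  have hR20 : 0 < R2 := one_pos.trans hR2
  have hm0 : m ≠ 0 := by omega
  have hmR : (0:ℝ) < m := by
    have h : (2:ℝ) ≤ (m:ℝ) := by exact_mod_cast hm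
    linarith only [h]
  have hb2lt : b^2 < 1 := pow_lt_one₀ hb0.le hb2 two_ne_zero
  have h1b2 : (0:ℝ) < 1 - b^2 := by linarith only [hb2lt]
  -- positivity of frakC
  have hlogb : (b^2 - 1)/2 < b^2 * Real.log b := by
    have h1 : Real.log (b^2)⁻¹ < (b^2)⁻¹ - 1 :=
      Real.log_lt_sub_one_of_pos (by positivity)
        (by rw [ne_eq, inv_eq_one]; exact ne_of_lt hb2lt)
    rw [Real.log_inv, Real.log_pow] at h1
    push_cast at h1
    have hb2p : (0:ℝ) < b^2 := by positivity
    have h2 : b^2 * (b^2)⁻¹ = 1 := mul_inv_cancel₀ (ne_of_gt hb2p)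
    nlinarith [mul_lt_mul_of_pos_left h1 hb2p]
  have hN : (-(b^2/2) * Real.log b - (1 - b^2)/4 - ((1 - b^2)/2) * Real.log R2) < 0 := by
    have hlr2 : 0 < Real.log R2 := Real.log_pos hR2
    linarith only [hlogb, mul_pos h1b2 hlr2]
  have hL : Real.log (R1/R2) < 0 :=
    Real.log_neg (div_pos hR1 hR20) (by rw [div_lt_one hR20]; linarith only [hR1', hR2])
  set c := frakC R1 R2 b with hc_def
  have hc : 0 < c := by rw [hc_def, frakC]; exact div_pos_of_neg_of_neg hN hL
  set K := (1 - b^2) * (b^2 + 2*c) / (2*b^2) with hK_def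
  have hb2c : (0:ℝ) < b^2 + 2*c := by positivity
  have hKpos : 0 < K := by
    rw [hK_def]; exact div_pos (mul_pos h1b2 hb2c) (by positivity)
  have h2K : 1 - b^2 < 2*K := by
    have h3 : 2*K = (1 - b^2) * (b^2 + 2*c) / b^2 := by rw [hK_def]; ring
    rw [h3, lt_div_iff₀ (show (0:ℝ) < b^2 by positivity)]
    have h4 : 0 < (1 - b^2) * c := mul_pos h1b2 hc
    nlinarith [h4]
  -- abbreviations for the powers
  set p := R1^m with hp_def
  set q := R2^m with hq_def
  set s := b^m with hs_def
  have hp0 : 0 < p := pow_pos hR1 m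
  have hs0 : 0 < s := pow_pos hb0 m
  have hq1 : 1 < q := one_lt_pow₀ hR2 hm0
  have hq0 : 0 < q := one_pos.trans hq1
  have hps : p < s := pow_lt_pow_left₀ hb1 hR1.le hm0
  have hs1 : s < 1 := pow_lt_one₀ hb0.le hb2 hm0
  have hp1 : p < 1 := hps.trans hs1
  have e1 : R1^(2*m) = p^2 := by rw [hp_def, ← pow_mul, Nat.mul_comm]
  have e2 : R2^(2*m) = q^2 := by rw [hq_def, ← pow_mul, Nat.mul_comm]
  have e3 : b^(2*m) = s^2 := by rw [hs_def, ← pow_mul, Nat.mul_comm]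
  have e4 : (R1/R2)^(2*m) = p^2/q^2 := by rw [div_pow, e1, e2]
  have e5 : (R1/b)^(2*m) = p^2/s^2 := by rw [div_pow, e1, e3]
  have e6 : (b/R2)^(2*m) = s^2/q^2 := by rw [div_pow, e3, e2]
  -- denominators
  have hpq2 : p^2 < q^2 := pow_lt_pow_left₀ (hp1.trans hq1) hp0.le two_ne_zero
  have hq21 : 1 < q^2 := one_lt_pow₀ hq1 two_ne_zero
  have hps2 : p^2 < s^2 := pow_lt_pow_left₀ hps hp0.le two_ne_zero
  have hw : 0 < 1 - p^2/q^2 := by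
    rw [sub_pos, div_lt_one (by positivity)]; exact hpq2
  have hy : 0 < 1 - 1/q^2 := by
    rw [sub_pos, div_lt_one (by positivity)]; exact hq21
  have hxs : 0 < 1 - p^2/s^2 := by
    rw [sub_pos, div_lt_one (by positivity)]; exact hps2
  have hwne : 1 - p^2/q^2 ≠ 0 := ne_of_gt hw
  have hmne : (m:ℝ) ≠ 0 := ne_of_gt hmR
  have hq2ne : q^2 ≠ 0 := by positivity
  have hs2ne : s^2 ≠ 0 := by positivity
  have hsne : s ≠ 0 := ne_of_gt hs0
  have hbne : b ≠ 0 := ne_of_gt hb0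
  have hqpne : q^2 - p^2 ≠ 0 := ne_of_gt (by linarith only [hpq2])
  have hspne : s^2 - p^2 ≠ 0 := ne_of_gt (by linarith only [hps2])
  have hq1ne : q^2 - 1 ≠ 0 := ne_of_gt (by linarith only [hq21])
  -- main players
  set n : ℝ := (s^2 + 1 - 2*p^2)/q^2 + p^2 + p^2/s^2 - 2 with hn_def
  set T0 : ℝ := (1 - p^2)*(1 - 1/q^2) + (1 - p^2/s^2)*(1 - s^2/q^2 + 2*s*(1 - 1/q^2))
    with hT0_def
  set A : ℝ := K + (1/(2*(m:ℝ)))*(1/(1 - p^2/q^2))*n with hA_def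
  set B : ℝ := ((1 - 1/q^2)/(1 - p^2/q^2))*(s/(m:ℝ))*(1 - p^2/s^2) with hB_def
  have hBpos : 0 < B := by
    rw [hB_def]
    exact mul_pos (mul_pos (div_pos hy hw) (div_pos hs0 hmR)) hxs
  have hD : DeltaAnn R1 R2 b m = A^2 - B^2 := by
    simp only [DeltaAnn]
    rw [e1, e2, e3, e4, ← hc_def, hA_def, hB_def, hn_def, hK_def,
      ← div_pow (1 - 1/q^2), ← div_pow s]
    ring
  -- algebraic identities
  have hT : T0 + n = 2*s*(1 - 1/q^2)*(1 - p^2/s^2) := by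
    rw [hT0_def, hn_def]; field_simp; ring
  have hE : n + 2*s*(1 - 1/q^2)*(1 - p^2/s^2) + 2*(1 - s)*(1 - p^2/q^2)
      = (1 - s)^2 * (1/q^2 + p^2/s^2 + 2*p^2/(s*q^2)) := by
    rw [hn_def]; field_simp; ring
  have hmb : 2*(1 - s) ≤ (m:ℝ)*(1 - b^2) := by
    rw [hs_def]; exact aux_mb b hb0 hb2 m hm
  have hAmB : 2*(m:ℝ)*(1 - p^2/q^2)*(A - B) = 2*(m:ℝ)*K*(1 - p^2/q^2) - T0 := by
    have h2 : T0 = 2*s*(1 - 1/q^2)*(1 - p^2/s^2) - n := by linarith only [hT]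
    rw [hA_def, hB_def, h2, hn_def]; field_simp; ring
  have h2mw : (0:ℝ) < 2*(m:ℝ)*(1 - p^2/q^2) := by
    have h := mul_pos hmR hw; linarith only [h]
  have hApB : 0 < A + B := by
    have h3 : 2*(m:ℝ)*(1 - p^2/q^2)*(A + B)
        = 2*(m:ℝ)*K*(1 - p^2/q^2) + (n + 2*s*(1 - 1/q^2)*(1 - p^2/s^2)) := by
      rw [hA_def, hB_def, hn_def]; field_simp; ring
    have h4 : (0:ℝ) ≤ (1 - s)^2 * (1/q^2 + p^2/s^2 + 2*p^2/(s*q^2)) := by positivity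
    have hstep1 : 0 < (m:ℝ)*(1 - p^2/q^2)*(2*K - (1 - b^2)) :=
      mul_pos (mul_pos hmR hw) (by linarith only [h2K])
    have hstep2 : (0:ℝ) ≤ (1 - p^2/q^2)*((m:ℝ)*(1 - b^2) - 2*(1 - s)) :=
      mul_nonneg hw.le (by linarith only [hmb])
    have h5 : 0 < 2*(m:ℝ)*(1 - p^2/q^2)*(A + B) := by
      rw [h3]
      linarith only [hstep1, hstep2, hE, h4]
    rcases mul_pos_iff.mp h5 with ⟨_, h6⟩ | ⟨h6, _⟩
    · exact h6
    · exact absurd h6 (not_lt.mpr h2mw.le)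
  -- rewrite the goal
  rw [hD, e1, e2, e4, e5, e6]
  have hRHS : b^2 / ((1 - b^2) * (b^2 + 2*c)) * (1/(1 - p^2/q^2))
      * ((1 - p^2)*(1 - 1/q^2) + (1 - p^2/s^2)*(1 - s^2/q^2 + 2*s*(1 - 1/q^2)))
      = T0 / (2*K*(1 - p^2/q^2)) := by
    rw [hT0_def, hK_def]
    have hxne : (1 - b^2) * (b^2 + 2*c) ≠ 0 := ne_of_gt (mul_pos h1b2 hb2c)
    field_simp
  rw [hRHS, gt_iff_lt, div_lt_iff₀ (by positivity : (0:ℝ) < 2*K*(1 - p^2/q^2)),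
    aux_sq_iff hBpos hApB]
  constructor
  · intro h
    have h6 : 0 < 2*(m:ℝ)*(1 - p^2/q^2)*(A - B) := mul_pos h2mw (sub_pos.mpr h)
    rw [hAmB] at h6
    linarith only [h6]
  · intro h
    have h6 : 0 < 2*(m:ℝ)*(1 - p^2/q^2)*(A - B) := by rw [hAmB]; linarith only [h]
    rcases mul_pos_iff.mp h6 with ⟨_, h7⟩ | ⟨h7, _⟩
    · exact sub_pos.mp h7
    · exact absurd h7 (not_lt.mpr h2mw.le)

end DCV0
end
end

section
/- For every x > 0 and every b ∈ (0,1], the function y ↦ e^{−x·√(1+b²−2b·y)} is absolutely monotonic on (−1,1): for every n ∈ ℕ and every y ∈ (−1,1), its n-th derivative at y is strictly positive. -/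
/-!
On the half-line where `s(y) = √(a - 2by)` is positive, every derivative of
`y ↦ exp (-x s(y))` has the form `exp (-x s(y)) · Pₙ(1 / s(y))`, because `s' = -b / s`.
Differentiating gives the recursion `Pₙ₊₁ = b (x X Pₙ + X³ Pₙ')`, which preserves nonnegative
coefficients and, for `x, b > 0`, makes each `Pₙ` positive on `(0, ∞)`. For `a = 1 + b²`
and `y < 1` we have `a - 2by = (1 - b)² + 2b(1 - y) > 0`.
-/

open Real Polynomial

noncomputable section

namespace DCV7

section NonnegCoeffs

variable (R : Type*) [Semiring R] [PartialOrder R] [IsOrderedRing R]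

def nonnegCoeffs : Subsemiring R[X] where
  carrier := {p | ∀ i, 0 ≤ p.coeff i}
  zero_mem' := fun _ => by simp
  one_mem' := fun i => by rw [coeff_one]; split_ifs <;> simp
  add_mem' := fun hp hq i => by rw [coeff_add]; exact add_nonneg (hp i) (hq i)
  mul_mem' := fun hp hq i => by
    rw [coeff_mul]; exact Finset.sum_nonneg fun _ _ => mul_nonneg (hp _) (hq _)

variable {R}

theorem C_mem_nonnegCoeffs {c : R} (hc : 0 ≤ c) : C c ∈ nonnegCoeffs R := fun i => by
  rw [coeff_C]; split_ifs <;> simp [hc]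

theorem X_mem_nonnegCoeffs : (X : R[X]) ∈ nonnegCoeffs R := fun i => by
  rw [coeff_X]; split_ifs <;> simp

theorem derivative_mem_nonnegCoeffs {p : R[X]} (hp : p ∈ nonnegCoeffs R) :
    derivative p ∈ nonnegCoeffs R := fun i => by
  rw [coeff_derivative]
  exact mul_nonneg (hp (i + 1)) (add_nonneg (Nat.cast_nonneg i) zero_le_one)

theorem eval_nonneg_of_mem_nonnegCoeffs {p : R[X]} (hp : p ∈ nonnegCoeffs R) {w : R}
    (hw : 0 ≤ w) : 0 ≤ p.eval w := by
  rw [eval_eq_sum_range]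
  exact Finset.sum_nonneg fun i _ => mul_nonneg (hp i) (pow_nonneg hw i)

end NonnegCoeffs

/-- `derivPoly x b n` is the polynomial `Pₙ` with
`(d/dy)ⁿ exp (-x √(a - 2by)) = exp (-x √(a - 2by)) · Pₙ(1 / √(a - 2by))`. -/
def derivPoly (x b : ℝ) : ℕ → ℝ[X]
  | 0 => 1
  | n + 1 => C b * (C x * X * derivPoly x b n + X ^ 3 * derivative (derivPoly x b n))

theorem derivPoly_mem_nonnegCoeffs {x b : ℝ} (hx : 0 ≤ x) (hb : 0 ≤ b) (n : ℕ) :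
    derivPoly x b n ∈ nonnegCoeffs ℝ := by
  induction n with
  | zero => exact Subsemiring.one_mem _
  | succ n ih =>
    have hX := X_mem_nonnegCoeffs (R := ℝ)
    exact mul_mem (C_mem_nonnegCoeffs hb) (add_mem
      (mul_mem (mul_mem (C_mem_nonnegCoeffs hx) hX) ih)
      (mul_mem (pow_mem hX 3) (derivative_mem_nonnegCoeffs ih)))

theorem derivPoly_eval_pos {x b : ℝ} (hx : 0 < x) (hb : 0 < b) (n : ℕ) {w : ℝ} (hw : 0 < w) :
    0 < (derivPoly x b n).eval w := by
  induction n with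
  | zero => simp [derivPoly]
  | succ n ih =>
    have hderiv : 0 ≤ (derivative (derivPoly x b n)).eval w :=
      eval_nonneg_of_mem_nonnegCoeffs
        (derivative_mem_nonnegCoeffs (derivPoly_mem_nonnegCoeffs hx.le hb.le n)) hw.le
    simp only [derivPoly, eval_mul, eval_add, eval_C, eval_X, eval_pow]
    positivity

theorem hasDerivAt_exp_mul_eval_inv_sqrt (x a b : ℝ) (p : ℝ[X]) {z : ℝ}
    (hz : 0 < a - 2 * b * z) :
    HasDerivAt (fun y => exp (-x * √(a - 2 * b * y)) * p.eval (√(a - 2 * b * y))⁻¹)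
      (exp (-x * √(a - 2 * b * z)) *
        (C b * (C x * X * p + X ^ 3 * derivative p)).eval (√(a - 2 * b * z))⁻¹) z := by
  have hs : 0 < √(a - 2 * b * z) := sqrt_pos.mpr hz
  have hsqrt : HasDerivAt (fun y => √(a - 2 * b * y)) (-(2 * b) / (2 * √(a - 2 * b * z))) z := by
    refine HasDerivAt.sqrt ?_ hz.ne'
    simpa using ((hasDerivAt_id z).const_mul (2 * b)).const_sub a
  have hexp : HasDerivAt (fun y => exp (-x * √(a - 2 * b * y)))
      (exp (-x * √(a - 2 * b * z)) * (-x * (-(2 * b) / (2 * √(a - 2 * b * z))))) z :=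
    (hsqrt.const_mul (-x)).exp
  have heval : HasDerivAt (fun y => p.eval (√(a - 2 * b * y))⁻¹)
      ((derivative p).eval (√(a - 2 * b * z))⁻¹ *
        (-(-(2 * b) / (2 * √(a - 2 * b * z))) / √(a - 2 * b * z) ^ 2)) z :=
    (p.hasDerivAt _).comp z (hsqrt.inv hs.ne')
  refine (hexp.mul heval).congr_deriv ?_
  simp only [eval_mul, eval_add, eval_C, eval_X, eval_pow]
  field_simp

theorem iteratedDeriv_exp_neg_mul_sqrt (x a b : ℝ) (n : ℕ) {z : ℝ} (hz : 0 < a - 2 * b * z) :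
    iteratedDeriv n (fun y => exp (-x * √(a - 2 * b * y))) z =
      exp (-x * √(a - 2 * b * z)) * (derivPoly x b n).eval (√(a - 2 * b * z))⁻¹ := by
  induction n generalizing z with
  | zero => simp [derivPoly]
  | succ n ih =>
    have hopen : IsOpen {y : ℝ | 0 < a - 2 * b * y} :=
      isOpen_lt continuous_const (by fun_prop)
    have heq : iteratedDeriv n (fun y => exp (-x * √(a - 2 * b * y))) =ᶠ[nhds z]
        fun y => exp (-x * √(a - 2 * b * y)) * (derivPoly x b n).eval (√(a - 2 * b * y))⁻¹ :=
      Filter.eventually_of_mem (hopen.mem_nhds hz) fun y hy => ih hy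
    rw [iteratedDeriv_succ, heq.deriv_eq]
    exact (hasDerivAt_exp_mul_eval_inv_sqrt x a b _ hz).deriv

theorem one_add_sq_sub_two_mul_pos {b y : ℝ} (hb : 0 ≤ b) (hy : y < 1) :
    0 < 1 + b ^ 2 - 2 * b * y := by
  nlinarith [sq_nonneg (1 - b), mul_nonneg hb (sub_nonneg.mpr hy.le)]

/-- For every `x > 0` and `b ∈ (0,1]`, the function `y ↦ e^{−x·√(1+b²−2b·y)}` is absolutely
monotonic on `(−1,1)`: all its derivatives are strictly positive there. -/
theorem absolutely_monotonic (x : ℝ) (hx : 0 < x) (b : ℝ) (hb : b ∈ Set.Ioc (0:ℝ) 1)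
    (n : ℕ) (y : ℝ) (hy : y ∈ Set.Ioo (-1:ℝ) 1) :
    0 < iteratedDeriv n (fun y : ℝ => Real.exp (-x * Real.sqrt (1 + b^2 - 2*b*y))) y := by
  have hpos : 0 < 1 + b ^ 2 - 2 * b * y := one_add_sq_sub_two_mul_pos hb.1.le hy.2
  rw [iteratedDeriv_exp_neg_mul_sqrt x (1 + b ^ 2) b n hpos]
  have := derivPoly_eval_pos hx hb.1 n (inv_pos.mpr (sqrt_pos.mpr hpos))
  positivity

end DCV7
end
end

section
/- Assume (A1)–(A2) with exponent α ∈ (0,1). Then the measure μ satisfies ∫_0^∞ (1+x^{2−α+α²})^{−1} dμ(x) < ∞, and consequently ∫_0^∞ (1+x²)^{−1} dμ(x) ≤ 2·∫_0^∞ (1+x^{2−α+α²})^{−1} dμ(x) < ∞. -/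
/-!
Let `F(t) = ∫ e^{-tx} dμ(x)`, so that `K₀' = -F` on `(0, ∞)`. Since `F` is nonnegative and
nonincreasing, `t F(2t) ≤ ∫_t^1 F = K₀(t) - K₀(1)` for `0 < t ≤ 1/2`, and (A2) with
`γ = -α + α²` makes `∫_0^{1/2} t^{1+γ} F(2t) dt` finite. By Tonelli this integral equals
`∫ (∫_0^{1/2} t^{1+γ} e^{-2tx} dt) dμ(x)`, and restricting the inner integral to `(a, 2a]`
with `a = 1/(4 max(x, 1))`, where `e^{-2tx} ≥ e^{-1}`, bounds it below by
`(4^{2+γ} e)⁻¹ (1 + x^{2+γ})⁻¹`. The second claim is the pointwise bound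
`1 + x^β ≤ 2 (1 + x²)` for `0 ≤ β ≤ 2`.
-/

open MeasureTheory Real

noncomputable section

namespace DCV11

open Set

lemma sFinite_of_integrable_pos {α : Type*} [MeasurableSpace α] {μ : Measure α} {f : α → ℝ}
    (hf : Integrable f μ) (hpos : ∀ᵐ x ∂μ, 0 < f x) : SFinite μ := by
  have := isFiniteMeasure_withDensity_ofReal hf.2
  refine sFinite_of_absolutelyContinuous
    (withDensity_absolutelyContinuous' hf.1.aemeasurable.ennreal_ofReal ?_)
  filter_upwards [hpos] with x hx using by simpa using hx

lemma sub_mul_le_intervalIntegral_of_antitoneOn {F : ℝ → ℝ} {a b c : ℝ} (hab : a ≤ b)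
    (hbc : b ≤ c) (hF : AntitoneOn F (Icc a c)) (hF0 : ∀ s ∈ Icc b c, 0 ≤ F s) :
    (b - a) * F b ≤ ∫ s in a..c, F s := by
  have hint {u v : ℝ} (hu : a ≤ u) (huv : u ≤ v) (hv : v ≤ c) :
      IntervalIntegrable F volume u v :=
    (hF.mono (by rw [uIcc_of_le huv]; exact Icc_subset_Icc hu hv)).intervalIntegrable
  rw [← intervalIntegral.integral_add_adjacent_intervals (hint le_rfl hab hbc)
    (hint hab hbc le_rfl)]
  have hleft : (b - a) * F b ≤ ∫ s in a..b, F s := by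
    simpa using intervalIntegral.integral_mono_on hab intervalIntegrable_const
      (hint le_rfl hab hbc) fun s hs => hF ⟨hs.1, hs.2.trans hbc⟩ ⟨hab, hbc⟩ hs.2
  have hright : 0 ≤ ∫ s in b..c, F s := intervalIntegral.integral_nonneg hbc hF0
  linarith

lemma intervalIntegral_eq_sub_of_hasDerivAt_neg {K F : ℝ → ℝ} {a b : ℝ} (hab : a ≤ b)
    (hK : ∀ s ∈ Icc a b, HasDerivAt K (-F s) s) (hF : AntitoneOn F (Icc a b)) :
    ∫ s in a..b, F s = K a - K b := by
  have hFTC := intervalIntegral.integral_eq_sub_of_hasDerivAt (f' := fun s => -F s)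
    (by rwa [uIcc_of_le hab]) (hF.mono (uIcc_of_le hab).subset).intervalIntegrable.neg
  rw [intervalIntegral.integral_neg] at hFTC
  linarith

lemma mul_le_sub_of_hasDerivAt_neg {K F : ℝ → ℝ} {t : ℝ} (ht : 0 ≤ t) (ht1 : 2 * t ≤ 1)
    (hK : ∀ s ∈ Icc t 1, HasDerivAt K (-F s) s) (hF : AntitoneOn F (Icc t 1))
    (hF0 : ∀ s ∈ Icc t 1, 0 ≤ F s) :
    t * F (2 * t) ≤ K t - K 1 := by
  rw [← intervalIntegral_eq_sub_of_hasDerivAt_neg (by linarith) hK hF]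
  convert sub_mul_le_intervalIntegral_of_antitoneOn (by linarith) ht1 hF
    fun s hs => hF0 s ⟨by linarith [hs.1], hs.2⟩ using 2
  ring

def laplace (μ : Measure ℝ) (t : ℝ) : ℝ := ∫ x, exp (-t * x) ∂μ

section Laplace

variable {μ : Measure ℝ}

lemma laplace_nonneg (μ : Measure ℝ) (t : ℝ) : 0 ≤ laplace μ t :=
  integral_nonneg fun _ => (exp_pos _).le

lemma laplace_antitoneOn (hμ : ∀ᵐ x ∂μ, 0 ≤ x)
    (hint : ∀ t, 0 < t → Integrable (fun x => exp (-t * x)) μ) :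
    AntitoneOn (laplace μ) (Ioi 0) := fun s hs t ht hst =>
  integral_mono_ae (hint t ht) (hint s hs) <| by
    filter_upwards [hμ] with x hx
    exact exp_le_exp.2 (by nlinarith)

lemma ofReal_laplace {t : ℝ} (hint : Integrable (fun x => exp (-t * x)) μ) :
    ENNReal.ofReal (laplace μ t) = ∫⁻ x, ENNReal.ofReal (exp (-t * x)) ∂μ :=
  ofReal_integral_eq_lintegral_ofReal hint (ae_of_all _ fun _ => (exp_pos _).le)

lemma lintegral_setLIntegral_rpow_mul_exp [SFinite μ]
    (hint : ∀ t, 0 < t → Integrable (fun x => exp (-t * x)) μ) (p : ℝ) {s : Set ℝ}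
    (hs : MeasurableSet s) (hs0 : s ⊆ Ioi 0) :
    ∫⁻ x, (∫⁻ t in s, ENNReal.ofReal (t ^ p * exp (-(2 * t) * x))) ∂μ
      = ∫⁻ t in s, ENNReal.ofReal (t ^ p * laplace μ (2 * t)) := by
  rw [lintegral_lintegral_swap (Measurable.aemeasurable (by fun_prop))]
  refine setLIntegral_congr_fun hs fun t ht => ?_
  have ht0 : 0 < t := hs0 ht
  simp_rw [ENNReal.ofReal_mul (rpow_nonneg ht0.le p)]
  rw [ofReal_laplace (hint _ (by linarith))]
  exact lintegral_const_mul' _ _ ENNReal.ofReal_ne_top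

lemma mul_laplace_two_mul_le_abs_add_abs {K : ℝ → ℝ} (hμ : ∀ᵐ x ∂μ, 0 ≤ x)
    (hint : ∀ t, 0 < t → Integrable (fun x => exp (-t * x)) μ)
    (hK : ∀ t, 0 < t → HasDerivAt K (-laplace μ t) t) {t : ℝ}
    (ht : t ∈ Ioc (0 : ℝ) (1 / 2)) :
    t * laplace μ (2 * t) ≤ |K t| + |K 1| := by
  have hKt := mul_le_sub_of_hasDerivAt_neg ht.1.le (by linarith [ht.2])
    (fun s hs => hK s (ht.1.trans_le hs.1))
    ((laplace_antitoneOn hμ hint).mono fun s hs => ht.1.trans_le hs.1)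
    (fun s _ => laplace_nonneg μ s)
  linarith [le_abs_self (K t), neg_abs_le (K 1)]

end Laplace

lemma setLIntegral_rpow_mul_lt_top {K F : ℝ → ℝ} {γ : ℝ} (hγ : -1 < γ)
    (hK : IntegrableOn (fun t => |K t| * t ^ γ) (Ioc 0 1))
    (hF : ∀ t ∈ Ioc (0 : ℝ) (1 / 2), t * F t ≤ |K t| + |K 1|) :
    ∫⁻ t in Ioc 0 (1 / 2), ENNReal.ofReal (t ^ (1 + γ) * F t) < ⊤ := by
  have hg : IntegrableOn (fun t => |K t| * t ^ γ + |K 1| * t ^ γ) (Ioc 0 (1 / 2)) :=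
    (hK.mono_set (Ioc_subset_Ioc_right (by norm_num))).add <|
      ((intervalIntegrable_iff_integrableOn_Ioc_of_le (by norm_num)).1
        (intervalIntegral.intervalIntegrable_rpow' hγ)).const_mul _
  refine lt_of_le_of_lt (setLIntegral_mono' measurableSet_Ioc fun t ht =>
    ENNReal.ofReal_le_ofReal ?_) hg.setLIntegral_lt_top
  rw [rpow_add ht.1, rpow_one]
  nlinarith [hF t ht, rpow_nonneg ht.1.le γ]

lemma ofReal_inv_one_add_rpow_le {p x : ℝ} (hp : 0 ≤ p) (hx : 0 ≤ x) :
    ENNReal.ofReal ((1 + x ^ (p + 1))⁻¹) ≤ ENNReal.ofReal (4 ^ (p + 1) * exp 1) *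
      ∫⁻ t in Ioc 0 (1 / 2), ENNReal.ofReal (t ^ p * exp (-(2 * t) * x)) := by
  set m := max x 1 with hm_def
  set a := (4 * m)⁻¹ with ha_def
  have hm : 1 ≤ m := le_max_right x 1
  have ha : 0 < a := by positivity
  have ham : 4 * a * m = 1 := by simp only [a]; field_simp
  have hax : 4 * a * x ≤ 1 := by nlinarith [le_max_left x 1]
  have hsub : Ioc a (2 * a) ⊆ Ioc 0 (1 / 2) := fun t ht =>
    ⟨ha.trans ht.1, ht.2.trans (by nlinarith)⟩
  have hlow : ∀ t ∈ Ioc a (2 * a), a ^ p * exp (-1) ≤ t ^ p * exp (-(2 * t) * x) :=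
    fun t ht => mul_le_mul (rpow_le_rpow ha.le ht.1.le hp)
      (exp_le_exp.2 (by nlinarith [ht.2])) (exp_pos _).le (rpow_nonneg (ha.trans ht.1).le _)
  have hint : ENNReal.ofReal (a ^ p * exp (-1) * a)
      ≤ ∫⁻ t in Ioc 0 (1 / 2), ENNReal.ofReal (t ^ p * exp (-(2 * t) * x)) := calc
    _ = ∫⁻ _ in Ioc a (2 * a), ENNReal.ofReal (a ^ p * exp (-1)) := by
      rw [setLIntegral_const, volume_Ioc, ← ENNReal.ofReal_mul (by positivity)]
      ring_nf
    _ ≤ _ := setLIntegral_mono' measurableSet_Ioc fun t ht =>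
      ENNReal.ofReal_le_ofReal (hlow t ht)
    _ ≤ _ := lintegral_mono_set hsub
  have hmx : m ^ (p + 1) ≤ 1 + x ^ (p + 1) := by
    rcases le_total x 1 with h | h
    · rw [hm_def, max_eq_right h, one_rpow]
      linarith [rpow_nonneg hx (p + 1)]
    · rw [hm_def, max_eq_left h]
      linarith
  have hbound : (1 + x ^ (p + 1))⁻¹ ≤ 4 ^ (p + 1) * exp 1 * (a ^ p * exp (-1) * a) := calc
    (1 + x ^ (p + 1))⁻¹ ≤ (m ^ (p + 1))⁻¹ := inv_anti₀ (by positivity) hmx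
    _ = 4 ^ (p + 1) * exp 1 * (a ^ p * exp (-1) * a) := by
      rw [show a ^ p * exp (-1) * a = a ^ (p + 1) * exp (-1) by rw [rpow_add_one ha.ne']; ring,
        ha_def, inv_rpow (by positivity), mul_rpow (by norm_num) (by positivity), exp_neg]
      field_simp
  calc ENNReal.ofReal ((1 + x ^ (p + 1))⁻¹)
      ≤ ENNReal.ofReal (4 ^ (p + 1) * exp 1) * ENNReal.ofReal (a ^ p * exp (-1) * a) := by
        rw [← ENNReal.ofReal_mul (by positivity)]
        exact ENNReal.ofReal_le_ofReal hbound
    _ ≤ _ := by gcongr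

lemma inv_one_add_sq_le_two_mul_inv_one_add_rpow {β x : ℝ} (hβ0 : 0 ≤ β) (hβ2 : β ≤ 2)
    (hx : 0 ≤ x) : (1 + x ^ 2)⁻¹ ≤ 2 * (1 + x ^ β)⁻¹ := by
  have hxβ : x ^ β ≤ 1 + x ^ 2 := by
    rcases le_total x 1 with h | h
    · nlinarith [rpow_le_one hx h hβ0, sq_nonneg x]
    · have := rpow_le_rpow_of_exponent_le h hβ2
      norm_cast at this
      linarith
  rw [← div_eq_mul_inv, le_div_iff₀ (by positivity), inv_mul_le_iff₀ (by positivity)]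
  linarith [sq_nonneg x]

theorem mu_integrability_general
    (K0 : ℝ → ℝ) (μ : Measure ℝ)
    -- (A1)
    (hK0diff : ∀ t : ℝ, 0 < t → DifferentiableAt ℝ K0 t)
    (hμsupp : μ (Set.Iio 0) = 0)
    (hμint : ∀ t : ℝ, 0 < t → Integrable (fun x => Real.exp (-t*x)) μ)
    (hrep : ∀ t : ℝ, 0 < t → deriv K0 t = -∫ x, Real.exp (-t*x) ∂μ)
    -- (A2)
    (α : ℝ) (hα : α ∈ Set.Ioo (0:ℝ) 1)
    (hK0int : IntegrableOn (fun t => |K0 t| * t ^ (-α + α^2)) (Set.Ioc (0:ℝ) 1)) :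
    (∫⁻ x, ENNReal.ofReal ((1 + x ^ (2 - α + α^2))⁻¹) ∂μ) < ⊤ ∧
    (∫⁻ x, ENNReal.ofReal ((1 + x^2)⁻¹) ∂μ)
      ≤ 2 * ∫⁻ x, ENNReal.ofReal ((1 + x ^ (2 - α + α^2))⁻¹) ∂μ := by
  obtain ⟨hα0, hα1⟩ := hα
  set γ := -α + α ^ 2
  have hγ : -1 < γ := by nlinarith
  have hβ : 2 - α + α ^ 2 = (1 + γ) + 1 := by ring
  have hae : ∀ᵐ x ∂μ, 0 ≤ x :=
    ae_iff.2 (measure_mono_null (fun _ hx => not_le.1 hx) hμsupp)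
  have : SFinite μ :=
    sFinite_of_integrable_pos (hμint 1 one_pos) (ae_of_all _ fun _ => exp_pos _)
  have hderiv (t : ℝ) (ht : 0 < t) : HasDerivAt K0 (-laplace μ t) t := by
    rw [laplace, ← hrep t ht]
    exact (hK0diff t ht).hasDerivAt
  have hp : 0 ≤ 1 + γ := by linarith
  set C := ENNReal.ofReal (4 ^ (1 + γ + 1) * exp 1)
  have hfin : ∫⁻ x, ENNReal.ofReal ((1 + x ^ (2 - α + α ^ 2))⁻¹) ∂μ < ⊤ := calc
    _ ≤ ∫⁻ x, C * (∫⁻ t in Ioc 0 (1 / 2),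
          ENNReal.ofReal (t ^ (1 + γ) * exp (-(2 * t) * x))) ∂μ := by
        rw [hβ]
        exact lintegral_mono_ae (hae.mono fun x hx => ofReal_inv_one_add_rpow_le hp hx)
    _ = C * ∫⁻ t in Ioc 0 (1 / 2), ENNReal.ofReal (t ^ (1 + γ) * laplace μ (2 * t)) := by
        rw [lintegral_const_mul' _ _ ENNReal.ofReal_ne_top,
          lintegral_setLIntegral_rpow_mul_exp hμint _ measurableSet_Ioc Ioc_subset_Ioi_self]
    _ < ⊤ := ENNReal.mul_lt_top ENNReal.ofReal_lt_top <|
      setLIntegral_rpow_mul_lt_top hγ hK0int fun _ ht =>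
        mul_laplace_two_mul_le_abs_add_abs hae hμint hderiv ht
  refine ⟨hfin, le_of_le_of_eq (lintegral_mono_ae (hae.mono fun x hx => ?_))
    (lintegral_const_mul' _ _ ENNReal.ofNat_ne_top)⟩
  rw [← ENNReal.ofReal_ofNat 2, ← ENNReal.ofReal_mul zero_le_two]
  exact ENNReal.ofReal_le_ofReal
    (inv_one_add_sq_le_two_mul_inv_one_add_rpow (by nlinarith) (by nlinarith) hx)

/-- Under (A1)–(A2) with exponent `α ∈ (0,1)`: `∫_0^∞ (1+x^{2−α+α²})⁻¹ dμ(x) < ∞`, and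
`∫_0^∞ (1+x²)⁻¹ dμ(x) ≤ 2·∫_0^∞ (1+x^{2−α+α²})⁻¹ dμ(x)`. -/
theorem mu_integrability
    (K0 : ℝ → ℝ) (μ : Measure ℝ)
    -- (A1)
    (hK0diff : ∀ t : ℝ, 0 < t → DifferentiableAt ℝ K0 t)
    (hμ : μ ≠ 0) (hμsupp : μ (Set.Iio 0) = 0)
    (hμint : ∀ t : ℝ, 0 < t → Integrable (fun x => Real.exp (-t*x)) μ)
    (hrep : ∀ t : ℝ, 0 < t → deriv K0 t = -∫ x, Real.exp (-t*x) ∂μ)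
    -- (A2)
    (α : ℝ) (hα : α ∈ Set.Ioo (0:ℝ) 1)
    (hK0int : IntegrableOn (fun t => |K0 t| * t ^ (-α + α^2)) (Set.Ioc (0:ℝ) 1)) :
    (∫⁻ x, ENNReal.ofReal ((1 + x ^ (2 - α + α^2))⁻¹) ∂μ) < ⊤ ∧
    (∫⁻ x, ENNReal.ofReal ((1 + x^2)⁻¹) ∂μ)
      ≤ 2 * ∫⁻ x, ENNReal.ofReal ((1 + x ^ (2 - α + α^2))⁻¹) ∂μ :=
  mu_integrability_general K0 μ hK0diff hμsupp hμint hrep α hα hK0int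

end DCV11
end
end
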